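/- arXiv:1912.12415 — 2 statements merged into one kernel-verified Lean document; each statement's English description precedes it below -/
import Mathlib

section
/- Let G be a group such that x ⊗ x = 1_⊗ for all x ∈ G. Then every tensor central automorphism of G is a tensor commuting automorphism of G; that is, Aut_c^⊗(G) ⊆ A^⊗(G). -/
/-!
Non-abelian tensor square `G ⊗ G`, constructed as the presented group on
symbols `g ⊗ h` with the defining relations
`g*g' ⊗ h = (g^{g'} ⊗ h^{g'}) * (g' ⊗ h)` and
`g ⊗ h*h' = (g ⊗ h') * (g^{h'} ⊗ h^{h'})`, where `a ^ b = b⁻¹ * a * b`.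
-/

variable {G : Type*} [Group G]

/-- Defining relations of the non-abelian tensor square `G ⊗ G`. -/
def tensorRels (G : Type*) [Group G] : Set (FreeGroup (G × G)) :=
  {r | (∃ g g' h : G,
      r = FreeGroup.of (g * g', h) *
        (FreeGroup.of (g'⁻¹ * g * g', g'⁻¹ * h * g') * FreeGroup.of (g', h))⁻¹) ∨
    (∃ g h h' : G,
      r = FreeGroup.of (g, h * h') *
        (FreeGroup.of (g, h') * FreeGroup.of (h'⁻¹ * g * h', h'⁻¹ * h * h'))⁻¹)}

/-- The non-abelian tensor square `G ⊗ G`. -/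
abbrev TensorSquare (G : Type*) [Group G] := PresentedGroup (tensorRels G)

/-- The tensor `g ⊗ h` as an element of `G ⊗ G`. -/
def tmul (g h : G) : TensorSquare G := PresentedGroup.of (g, h)

theorem tensorRels_eq_one {r : FreeGroup (G × G)} (hr : r ∈ tensorRels G) :
    PresentedGroup.mk (tensorRels G) r = 1 :=
  (QuotientGroup.eq_one_iff r).mpr (Subgroup.subset_normalClosure hr)

/-- The first defining relation of `G ⊗ G`. -/
theorem tmul_rel₁ (g g' h : G) :
    tmul (g * g') h = tmul (g'⁻¹ * g * g') (g'⁻¹ * h * g') * tmul g' h := by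
  have h1 := tensorRels_eq_one (G := G) (Or.inl ⟨g, g', h, rfl⟩)
  rw [map_mul, map_inv, map_mul, mul_inv_eq_one] at h1
  exact h1

/-- The second defining relation of `G ⊗ G`. -/
theorem tmul_rel₂ (g h h' : G) :
    tmul g (h * h') = tmul g h' * tmul (h'⁻¹ * g * h') (h'⁻¹ * h * h') := by
  have h1 := tensorRels_eq_one (G := G) (Or.inr ⟨g, h, h', rfl⟩)
  rw [map_mul, map_inv, map_mul, mul_inv_eq_one] at h1
  exact h1

/-- The action of `x : G` on `G ⊗ G`, determined by `(g ⊗ h) ^ x = (x⁻¹*g*x) ⊗ (x⁻¹*h*x)`. -/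
def tensorAct (x : G) : TensorSquare G →* TensorSquare G :=
  PresentedGroup.toGroup
    (f := fun p : G × G => tmul (x⁻¹ * p.1 * x) (x⁻¹ * p.2 * x))
    (by
      rintro r (⟨g, g', h, rfl⟩ | ⟨g, h, h', rfl⟩) <;>
        simp only [map_mul, map_inv, FreeGroup.lift_apply_of, mul_inv_eq_one]
      · have := tmul_rel₁ (x⁻¹ * g * x) (x⁻¹ * g' * x) (x⁻¹ * h * x)
        convert this using 2 <;> group
      · have := tmul_rel₂ (x⁻¹ * g * x) (x⁻¹ * h * x) (x⁻¹ * h' * x)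
        convert this using 2 <;> group)

@[simp] theorem tensorAct_tmul (x g h : G) :
    tensorAct x (tmul g h) = tmul (x⁻¹ * g * x) (x⁻¹ * h * x) :=
  PresentedGroup.toGroup.of _

/-- An automorphism `α` of `G` is tensor commuting if `g ⊗ α g = 1` for all `g`. -/
def IsTensorCommuting (α : G ≃* G) : Prop := ∀ g : G, tmul g (α g) = 1

/-- An automorphism `α` of `G` is tensor central if `[x, α] = x⁻¹ * α x` lies in the
tensor center of `G`, i.e. `(x⁻¹ * α x) ⊗ y = 1` for all `x y`. -/
def IsTensorCentral (α : G ≃* G) : Prop := ∀ x y : G, tmul (x⁻¹ * α x) y = 1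

/-- The inner automorphism `T_g : x ↦ x ^ g = g⁻¹ * x * g` of `G` induced by `g`. -/
def innerAut (g : G) : G ≃* G := MulAut.conj g⁻¹


/-!
Write `α g = g * c` with `c = g⁻¹ * α g`. Expanding `g ⊗ g c` by the second defining relation
gives `(g ⊗ c) * (g^c ⊗ g^c)`; the second factor is trivial by hypothesis, and `g ⊗ c = 1`
because `c ⊗ g = 1` and the map `g ⊗ h ↦ (h ⊗ g)⁻¹` is a well-defined endomorphism of `G ⊗ G`.
-/

def tensorSwap : TensorSquare G →* TensorSquare G :=
  PresentedGroup.toGroup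
    (f := fun p : G × G => (tmul p.2 p.1)⁻¹)
    (by
      rintro r (⟨g, g', h, rfl⟩ | ⟨g, h, h', rfl⟩) <;>
        simp only [map_mul, map_inv, FreeGroup.lift_apply_of, mul_inv_rev, inv_inv]
      · rw [tmul_rel₂ h g g']
        group
      · rw [tmul_rel₁ h h' g]
        group)

@[simp] theorem tensorSwap_tmul (g h : G) : tensorSwap (tmul g h) = (tmul h g)⁻¹ :=
  PresentedGroup.toGroup.of _

theorem tmul_eq_one_comm {g h : G} : tmul g h = 1 ↔ tmul h g = 1 := by
  constructor <;> intro h₁ <;> simpa using congrArg tensorSwap h₁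

theorem tmul_mul_right_self (hsq : ∀ x : G, tmul x x = 1) (g c : G) :
    tmul g (g * c) = tmul g c := by
  rw [tmul_rel₂, hsq, mul_one]

/-- If `x ⊗ x = 1` for all `x ∈ G`, then every tensor central automorphism of `G` is a
tensor commuting automorphism. -/
theorem stmt_11 (G : Type*) [Group G] (hsq : ∀ x : G, tmul x x = 1)
    (α : G ≃* G) (hα : IsTensorCentral α) : IsTensorCommuting α := by
  intro g
  calc tmul g (α g) = tmul g (g * (g⁻¹ * α g)) := by rw [mul_inv_cancel_left]
    _ = tmul g (g⁻¹ * α g) := tmul_mul_right_self hsq g _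
    _ = 1 := tmul_eq_one_comm.mpr (hα g g)
end

section
/- Let G be a group. Then the set Aut_c^⊗(G) ∩ Inn(G) of inner automorphisms of G that are tensor central automorphisms is a subgroup of Aut(G), and it is isomorphic to the quotient group Z_2^⊗(G)/Z(G) via the map induced by g ↦ T_g, where T_g(x) = g⁻¹xg. -/
/-!
Non-abelian tensor square `G ⊗ G`, constructed as the presented group on
symbols `g ⊗ h` with the defining relations
`g*g' ⊗ h = (g^{g'} ⊗ h^{g'}) * (g' ⊗ h)` and
`g ⊗ h*h' = (g ⊗ h') * (g^{h'} ⊗ h^{h'})`, where `a ^ b = b⁻¹ * a * b`.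
-/

variable {G : Type*} [Group G]

/-!
The commutator map `G ⊗ G → G`, `g ⊗ h ↦ [g, h]`, shows that the tensor center is central.
Since `x⁻¹ T_a(x) = [a, x]⁻¹` and the tensor center is a subgroup, `T_a` is tensor central
exactly when `a ∈ Z₂^⊗(G)`. Hence `Z₂^⊗(G)` is abelian modulo `Z(G)`, so on it `g ↦ T_g`
is a homomorphism; its kernel is `Z(G) ∩ Z₂^⊗(G)` and its image is `Aut_c^⊗(G) ∩ Inn(G)`.
-/

def tensorCommutator : TensorSquare G →* G :=
  PresentedGroup.toGroup (f := fun p : G × G => p.1⁻¹ * p.2⁻¹ * p.1 * p.2) (by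
    rintro r (⟨g, g', h, rfl⟩ | ⟨g, h, h', rfl⟩) <;>
      simp only [map_mul, map_inv, FreeGroup.lift_apply_of, mul_inv_eq_one] <;> group)

@[simp] theorem tensorCommutator_tmul (g h : G) :
    tensorCommutator (tmul g h) = g⁻¹ * h⁻¹ * g * h :=
  PresentedGroup.toGroup.of _

theorem tmul_one_left (h : G) : tmul (1 : G) h = 1 := by
  simpa using tmul_rel₁ (1 : G) 1 h

theorem tmul_mul_left_eq_one {a b : G} (ha : ∀ x, tmul a x = 1) (hb : ∀ x, tmul b x = 1)
    (x : G) : tmul (a * b) x = 1 := by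
  have hconj : tmul (b⁻¹ * a * b) (b⁻¹ * x * b) = 1 := by
    rw [← tensorAct_tmul, ha, map_one]
  rw [tmul_rel₁, hconj, hb, mul_one]

theorem tmul_inv_left_eq_one {a : G} (ha : ∀ x, tmul a x = 1) (x : G) : tmul a⁻¹ x = 1 := by
  have h := tmul_rel₁ a⁻¹ a (a * x * a⁻¹)
  rw [inv_mul_cancel, tmul_one_left, ha, mul_one] at h
  convert h.symm using 2 <;> group

variable (G) in
def tensorCenter : Subgroup G where
  carrier := {a | ∀ x, tmul a x = 1}
  one_mem' := tmul_one_left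
  mul_mem' := tmul_mul_left_eq_one
  inv_mem' := tmul_inv_left_eq_one

theorem mem_tensorCenter {a : G} : a ∈ tensorCenter G ↔ ∀ x, tmul a x = 1 := Iff.rfl

theorem tensorCenter_le_center : tensorCenter G ≤ Subgroup.center G := by
  intro a ha
  rw [Subgroup.mem_center_iff]
  intro g
  have h : a⁻¹ * g⁻¹ * a * g = 1 := by simpa using congrArg tensorCommutator (ha g)
  calc g * a = a * g * (a⁻¹ * g⁻¹ * a * g)⁻¹ := by group
    _ = a * g := by rw [h, inv_one, mul_one]

theorem innerAut_apply (a x : G) : innerAut a x = a⁻¹ * x * a := by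
  simp [innerAut]

theorem innerAut_mul (a b : G) : innerAut (a * b) = innerAut b * innerAut a := by
  ext x
  simp only [innerAut_apply, MulAut.mul_apply]
  group

theorem innerAut_eq_one_iff {a : G} : innerAut a = 1 ↔ a ∈ Subgroup.center G := by
  simp only [MulEquiv.ext_iff, innerAut_apply, MulAut.one_apply, mul_assoc, inv_mul_eq_iff_eq_mul,
    Subgroup.mem_center_iff]

theorem innerAut_isTensorCentral_iff {a : G} :
    IsTensorCentral (innerAut a) ↔ ∀ g, a⁻¹ * g⁻¹ * a * g ∈ tensorCenter G := by
  have h : ∀ x, x⁻¹ * innerAut a x = (a⁻¹ * x⁻¹ * a * x)⁻¹ := fun x => by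
    rw [innerAut_apply]; group
  simp only [IsTensorCentral, h, ← mem_tensorCenter, inv_mem_iff]

theorem innerAut_mul_of_mem_center (a : G) {c : G} (hc : c ∈ Subgroup.center G) :
    innerAut (a * c) = innerAut a := by
  rw [innerAut_mul, innerAut_eq_one_iff.mpr hc, one_mul]

theorem commute_innerAut {a b : G} (h : a⁻¹ * b⁻¹ * a * b ∈ Subgroup.center G) :
    Commute (innerAut a) (innerAut b) := by
  rw [Commute, SemiconjBy, ← innerAut_mul, ← innerAut_mul, ← innerAut_mul_of_mem_center (b * a) h]
  group

/-- Since `T_(ab) = T_b T_a`, `g ↦ T_g` is a homomorphism only on a subgroup that is abelian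
modulo the center. -/
def innerAutHom (H : Subgroup G)
    (hH : ∀ a ∈ H, ∀ b ∈ H, a⁻¹ * b⁻¹ * a * b ∈ Subgroup.center G) : H →* (G ≃* G) :=
  MonoidHom.mk' (fun a => innerAut (a : G)) fun a b => by
    rw [Subgroup.coe_mul, innerAut_mul, (commute_innerAut (hH a a.2 b b.2)).eq]

theorem ker_innerAutHom (H : Subgroup G)
    (hH : ∀ a ∈ H, ∀ b ∈ H, a⁻¹ * b⁻¹ * a * b ∈ Subgroup.center G) :
    (innerAutHom H hH).ker = (Subgroup.center G).subgroupOf H := by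
  ext a
  exact innerAut_eq_one_iff

/-- The set of inner automorphisms of `G` that are tensor central is a subgroup of
`Aut G`, isomorphic to `Z₂⊗(G)/Z(G)` via the map induced by `g ↦ T_g`. Here `Z` is the
second tensor center `Z₂⊗(G)` as a subgroup of `G`. -/
theorem stmt_18 (G : Type*) [Group G]
    (Z : Subgroup G)
    (hZ : (Z : Set G) = {a : G | ∀ g h : G, tmul (a⁻¹ * g⁻¹ * a * g) h = 1}) :
    ∃ S : Subgroup (G ≃* G),
      (S : Set (G ≃* G)) = {α : G ≃* G | IsTensorCentral α ∧ ∃ g : G, α = innerAut g} ∧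
      ∃ φ : Z ⧸ (Subgroup.center G).subgroupOf Z ≃* S,
        ∀ a : Z, (φ (QuotientGroup.mk a) : G ≃* G) = innerAut (a : G) := by
  have hmem (a : G) : a ∈ Z ↔ IsTensorCentral (innerAut a) := by
    rw [innerAut_isTensorCentral_iff, ← SetLike.mem_coe, hZ]
    rfl
  have hZ_center : ∀ a ∈ Z, ∀ b ∈ Z, a⁻¹ * b⁻¹ * a * b ∈ Subgroup.center G := fun a ha b _ =>
    tensorCenter_le_center (innerAut_isTensorCentral_iff.mp ((hmem a).mp ha) b)
  let ψ := innerAutHom Z hZ_center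
  refine ⟨ψ.range, ?_, (QuotientGroup.quotientMulEquivOfEq (ker_innerAutHom Z hZ_center).symm).trans
    (QuotientGroup.quotientKerEquivRange ψ), fun a => rfl⟩
  ext α
  constructor
  · rintro ⟨a, rfl⟩
    exact ⟨(hmem a).mp a.2, a, rfl⟩
  · rintro ⟨hα, g, rfl⟩
    exact ⟨⟨g, (hmem g).mpr hα⟩, rfl⟩
end
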